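/- arXiv:1801.04784 — 4 statements merged into one kernel-verified Lean document; each statement's English description precedes it below -/
import Mathlib

section
/- Let m ≥ 1, n ≥ 1 and t be integers with 1 ≤ t ≤ n, and let b : ℕ → ℤ/mℤ be a function satisfying b(0) = 0, b(n+1) = 0, b(1) = 1, b(n) = 0, and the recurrence b(i−1) − 2·b(i) + b(i+1) = 0 for every integer i with 1 ≤ i ≤ n and i ≠ t. Then the image of t in ℤ/mℤ is 0. -/
/-- If `b : ℕ → ℤ/mℤ` satisfies `b 0 = 0`, `b (n+1) = 0`, `b 1 = 1`, `b n = 0`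
and the recurrence `b (i-1) - 2 b i + b (i+1) = 0` for all `1 ≤ i ≤ n`, `i ≠ t`,
where `1 ≤ t ≤ n`, then `t = 0` in `ℤ/mℤ`. -/
theorem stmt0 (m n t : ℕ) (hm : 1 ≤ m) (hn : 1 ≤ n) (ht1 : 1 ≤ t) (htn : t ≤ n)
    (b : ℕ → ZMod m) (hb0 : b 0 = 0) (hbn1 : b (n + 1) = 0)
    (hb1 : b 1 = 1) (hbn : b n = 0)
    (hrec : ∀ i : ℕ, 1 ≤ i → i ≤ n → i ≠ t → b (i - 1) - 2 * b i + b (i + 1) = 0) :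
    (t : ZMod m) = 0 := by
  -- Left of t: b i = i
  have left : ∀ i, i ≤ t → b i = (i : ZMod m) := by
    intro i
    induction i using Nat.strong_induction_on with
    | _ i ih =>
      match i with
      | 0 => intro _; simpa using hb0
      | 1 => intro _; simpa using hb1
      | (i + 2) =>
        intro h
        have h1 : i + 1 ≠ t := by omega
        have hr := hrec (i + 1) (by omega) (by omega) h1
        have e0 : b i = (i : ZMod m) := ih i (by omega) (by omega)
        have e1 : b (i + 1) = ((i + 1 : ℕ) : ZMod m) := ih (i + 1) (by omega) (by omega)
        simp only [Nat.add_sub_cancel] at hr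
        have : b (i + 2) = 2 * b (i + 1) - b i := by linear_combination hr
        rw [this, e0, e1]
        push_cast
        ring
  -- Right of t: b j = 0, by downward induction
  have right : ∀ d j, j + d = n + 1 → t ≤ j → b j = 0 := by
    intro d
    induction d using Nat.strong_induction_on with
    | _ d ih =>
      match d with
      | 0 =>
          intro j hj _
          obtain rfl : j = n + 1 := by omega
          exact hbn1
      | 1 =>
          intro j hj _
          obtain rfl : j = n := by omega
          exact hbn
      | (d + 2) =>
        intro j hj htj
        have h1 : j + 1 ≠ t := by omega
        have hr := hrec (j + 1) (by omega) (by omega) h1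
        have e1 : b (j + 1) = 0 := ih (d + 1) (by omega) (j + 1) (by omega) (by omega)
        have e2 : b (j + 2) = 0 := ih d (by omega) (j + 2) (by omega) (by omega)
        simp only [Nat.add_sub_cancel] at hr
        rw [e1, e2] at hr
        linear_combination hr
  have h1 : b t = (t : ZMod m) := left t le_rfl
  have h2 : b t = 0 := right (n + 1 - t) t (by omega) le_rfl
  rw [h2] at h1
  exact h1.symm
end

section
/- Let m ≥ 1, n ≥ 1 and t be integers with 1 ≤ t ≤ n, and assume that m does not divide t. Then there is no function b : ℕ → ℤ/mℤ satisfying b(0) = 0, b(n+1) = 0, b(1) = 1, b(n) = 0, and the recurrence b(i−1) − 2·b(i) + b(i+1) = 0 for every integer i with 1 ≤ i ≤ n and i ≠ t. In particular no such b exists whenever m > n. -/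
/-- If `1 ≤ t ≤ n` and `m` does not divide `t`, there is no `b : ℕ → ℤ/mℤ` with
`b 0 = 0`, `b (n+1) = 0`, `b 1 = 1`, `b n = 0` satisfying the recurrence
`b (i-1) - 2 b i + b (i+1) = 0` for all `1 ≤ i ≤ n` with `i ≠ t`. -/
theorem stmt1 (m n t : ℕ) (hm : 1 ≤ m) (hn : 1 ≤ n) (ht1 : 1 ≤ t) (htn : t ≤ n)
    (hmt : ¬ m ∣ t) :
    ¬ ∃ b : ℕ → ZMod m,
      b 0 = 0 ∧ b (n + 1) = 0 ∧ b 1 = 1 ∧ b n = 0 ∧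
      ∀ i : ℕ, 1 ≤ i → i ≤ n → i ≠ t → b (i - 1) - 2 * b i + b (i + 1) = 0 := by
  rintro ⟨b, hb0, hb2, hb1, hb4, hb5⟩
  have up : ∀ i, i ≤ t → b i = (i : ZMod m) := by
    intro i
    induction i using Nat.strong_induction_on with
    | _ i ih =>
      match i with
      | 0 => intro _; simpa using hb0
      | 1 => intro _; simpa using hb1
      | (k+2) =>
        intro hi
        have hrec := hb5 (k+1) (by omega) (by omega) (by omega)
        simp only [Nat.add_sub_cancel] at hrec
        have h1 := ih k (by omega) (by omega)
        have h2 := ih (k+1) (by omega) (by omega)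
        rw [h1, h2] at hrec
        push_cast at hrec ⊢
        linear_combination hrec
  have down : ∀ d i, i = n + 1 - d → t ≤ i → b i = 0 := by
    intro d
    induction d using Nat.strong_induction_on with
    | _ d ih =>
      intro i hi hti
      rcases eq_or_lt_of_le (show i ≤ n + 1 by omega) with h | h
      · rw [h]; exact hb2
      rcases eq_or_lt_of_le (show i ≤ n by omega) with h' | h'
      · rw [h']; exact hb4
      · have hrec := hb5 (i+1) (by omega) (by omega) (by omega)
        simp only [Nat.add_sub_cancel] at hrec
        have h1 := ih (n - i) (by omega) (i + 1) (by omega) (by omega)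
        have h2 := ih (n - i - 1) (by omega) (i + 2) (by omega) (by omega)
        rw [h1, h2] at hrec
        linear_combination hrec
  have hu := up t le_rfl
  have hd := down (n + 1 - t) t (by omega) le_rfl
  rw [hu] at hd
  haveI : NeZero m := ⟨by omega⟩
  exact hmt ((ZMod.natCast_eq_zero_iff t m).mp hd)
end

section
/- Let m ≥ 1, n ≥ 1 and t be integers with 1 ≤ t ≤ n, and let b : ℕ → ℤ/mℤ be a function satisfying b(0) = 0, b(n+1) = 0, b(1) + b(n) = 1, and the recurrence b(i−1) − 2·b(i) + b(i+1) = 0 for every integer i with 1 ≤ i ≤ n and i ≠ t. Then in ℤ/mℤ one has t = (n+1)·b(n). -/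
/-- If `b : ℕ → ℤ/mℤ` satisfies `b 0 = 0`, `b (n+1) = 0`, `b 1 + b n = 1`
and the recurrence `b (i-1) - 2 b i + b (i+1) = 0` for all `1 ≤ i ≤ n`, `i ≠ t`,
where `1 ≤ t ≤ n`, then `t = (n+1) * b n` in `ℤ/mℤ`. -/
theorem stmt2 (m n t : ℕ) (hm : 1 ≤ m) (hn : 1 ≤ n) (ht1 : 1 ≤ t) (htn : t ≤ n)
    (b : ℕ → ZMod m) (hb0 : b 0 = 0) (hbn1 : b (n + 1) = 0)
    (hb1n : b 1 + b n = 1)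
    (hrec : ∀ i : ℕ, 1 ≤ i → i ≤ n → i ≠ t → b (i - 1) - 2 * b i + b (i + 1) = 0) :
    (t : ZMod m) = ((n : ZMod m) + 1) * b n := by
  -- Claim A: below t, b i = i * b 1
  have A : ∀ i, i ≤ t → b i = (i : ZMod m) * b 1 := by
    intro i
    induction i using Nat.strong_induction_on with
    | _ i ih =>
      match i with
      | 0 => intro _; simpa using hb0
      | 1 => intro _; simp
      | (k+2) =>
        intro h
        have h1 := ih (k+1) (by omega) (by omega)
        have h0 := ih k (by omega) (by omega)
        have hr : b k - 2 * b (k+1) + b (k+2) = 0 := by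
          simpa using hrec (k+1) (by omega) (by omega) (by omega)
        push_cast at h1 h0 ⊢
        linear_combination hr + 2 * h1 - h0
  -- Claim B: above t, b (n+1-k) = k * b n
  have B : ∀ k, k ≤ n + 1 - t → b (n + 1 - k) = (k : ZMod m) * b n := by
    intro k
    induction k using Nat.strong_induction_on with
    | _ k ih =>
      match k with
      | 0 => intro _; simpa using hbn1
      | 1 => intro _; simp
      | (k+2) =>
        intro h
        have hfact : t + k + 2 ≤ n + 1 := by omega
        have h1 := ih (k+1) (by omega) (by omega)
        have h0 := ih k (by omega) (by omega)
        have hr := hrec (n - k) (by omega) (by omega) (by omega)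
        have e0 : n - k - 1 = n + 1 - (k + 2) := by omega
        have e2 : n - k + 1 = n + 1 - k := by omega
        have e1 : n - k = n + 1 - (k + 1) := by omega
        rw [e0, e2, e1] at hr
        push_cast at h1 h0 hr ⊢
        linear_combination hr + 2 * h1 - h0
  have hAt : b t = (t : ZMod m) * b 1 := A t le_rfl
  have hBt := B (n + 1 - t) le_rfl
  have e3 : n + 1 - (n + 1 - t) = t := by omega
  rw [e3] at hBt
  have e4 : ((n + 1 - t : ℕ) : ZMod m) = (n : ZMod m) + 1 - t := by
    push_cast [Nat.cast_sub (by omega : t ≤ n + 1)]; ring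
  rw [e4] at hBt
  have E : (t : ZMod m) * b 1 = ((n : ZMod m) + 1 - t) * b n := by
    rw [← hAt, hBt]
  linear_combination E - (t : ZMod m) * hb1n
end

section
/- Let m ≥ 1, n ≥ 1 and t be integers with 1 ≤ t ≤ n, and assume that gcd(n+1, m) does not divide t (for example n+1 divides m but n+1 does not divide t). Then there is no function b : ℕ → ℤ/mℤ satisfying b(0) = 0, b(n+1) = 0, b(1) + b(n) = 1, and the recurrence b(i−1) − 2·b(i) + b(i+1) = 0 for every integer i with 1 ≤ i ≤ n and i ≠ t. -/
/-- A sequence in `ZMod m` satisfying the linear recurrence up to `N`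
with `f 0 = 0` is an arithmetic progression: `f i = i * f 1`. -/
lemma lin_aux (m : ℕ) (f : ℕ → ZMod m) (h0 : f 0 = 0) (N : ℕ)
    (hrec : ∀ k, k + 2 ≤ N → f k - 2 * f (k + 1) + f (k + 2) = 0) :
    ∀ i, i ≤ N → f i = (i : ZMod m) * f 1 := by
  intro i
  induction i using Nat.strong_induction_on with
  | _ i ih =>
    match i with
    | 0 => intro _; simpa using h0
    | 1 => intro _; simp
    | (k + 2) =>
      intro hk
      have h1 : f k = (k : ZMod m) * f 1 := ih k (by omega) (by omega)
      have h2 : f (k + 1) = ((k + 1 : ℕ) : ZMod m) * f 1 := ih (k + 1) (by omega) (by omega)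
      have hr := hrec k hk
      have : f (k + 2) = 2 * f (k + 1) - f k := by linear_combination hr
      rw [this, h1, h2]
      push_cast
      ring

/-- If `1 ≤ t ≤ n` and `gcd (n+1) m` does not divide `t`, there is no
`b : ℕ → ZMod m` with `b 0 = 0`, `b (n+1) = 0`, `b 1 + b n = 1` satisfying the
recurrence `b (i-1) - 2 b i + b (i+1) = 0` for all `1 ≤ i ≤ n` with `i ≠ t`. -/
theorem stmt3 (m n t : ℕ) (hm : 1 ≤ m) (hn : 1 ≤ n) (ht1 : 1 ≤ t) (htn : t ≤ n)
    (hgcd : ¬ Nat.gcd (n + 1) m ∣ t) :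
    ¬ ∃ b : ℕ → ZMod m,
      b 0 = 0 ∧ b (n + 1) = 0 ∧ b 1 + b n = 1 ∧
      ∀ i : ℕ, 1 ≤ i → i ≤ n → i ≠ t → b (i - 1) - 2 * b i + b (i + 1) = 0 := by
  rintro ⟨b, h0, hN, hsum, hrec⟩
  -- Left side: b i = i * b 1 for i ≤ t
  have hleft : ∀ i, i ≤ t → b i = (i : ZMod m) * b 1 := by
    apply lin_aux m b h0
    intro k hk
    have := hrec (k + 1) (by omega) (by omega) (by omega)
    simpa using this
  -- Right side: b (n+1-j) = j * b n for j ≤ n+1-t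
  have hright : ∀ j, j ≤ n + 1 - t → b (n + 1 - j) = (j : ZMod m) * b n := by
    have := lin_aux m (fun j => b (n + 1 - j)) (by simpa using hN) (n + 1 - t) ?_
    · intro j hj
      have h := this j hj
      simpa [show n + 1 - 1 = n by omega] using h
    · intro k hk
      have hr := hrec (n - k) (by omega) (by omega) (by omega)
      have e1 : n + 1 - k = n - k + 1 := by omega
      have e2 : n + 1 - (k + 1) = n - k := by omega
      have e3 : n + 1 - (k + 2) = n - k - 1 := by omega
      simp only [e1, e2, e3]
      linear_combination hr
  -- evaluate at t
  have hA : b t = (t : ZMod m) * b 1 := hleft t le_rfl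
  have hB : b t = ((n + 1 - t : ℕ) : ZMod m) * b n := by
    have := hright (n + 1 - t) le_rfl
    rwa [show n + 1 - (n + 1 - t) = t by omega] at this
  have hcast : ((n + 1 - t : ℕ) : ZMod m) = ((n : ZMod m) + 1) - (t : ZMod m) := by
    push_cast [Nat.cast_sub (by omega : t ≤ n + 1)]
    ring
  -- derive t = (n+1) * (1 - b 1) in ZMod m
  have key : (t : ZMod m) = ((n : ZMod m) + 1) * (1 - b 1) := by
    have h1 : (t : ZMod m) * b 1 = (((n : ZMod m) + 1) - t) * b n := by
      rw [← hA, hB, hcast]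
    linear_combination h1 + (((n : ZMod m) + 1) - t) * hsum
  -- now deduce gcd (n+1) m ∣ t, contradiction
  set g := Nat.gcd (n + 1) m with hg
  haveI : NeZero m := ⟨by omega⟩
  have hgm : g ∣ m := Nat.gcd_dvd_right _ _
  have hgn : g ∣ n + 1 := Nat.gcd_dvd_left _ _
  haveI : NeZero g := ⟨Nat.gcd_ne_zero_left (by omega)⟩
  apply hgcd
  have : ((t : ℕ) : ZMod g) = 0 := by
    have := congrArg (ZMod.castHom hgm (ZMod g)) key
    rw [map_natCast] at this
    rw [this]
    have hzero : ((n : ZMod g) + 1) = 0 := by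
      have : ((n + 1 : ℕ) : ZMod g) = 0 := (ZMod.natCast_eq_zero_iff _ _).mpr hgn
      push_cast at this
      exact this
    rw [map_mul]
    have : (ZMod.castHom hgm (ZMod g)) ((n : ZMod m) + 1) = 0 := by
      rw [map_add, map_natCast, map_one, hzero]
    rw [this, zero_mul]
  exact (ZMod.natCast_eq_zero_iff _ _).mp this
end
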